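/- arXiv:2507.02389 — 8 statements merged into one kernel-verified Lean document; each statement's English description precedes it below -/
import Mathlib

section
/- Let A be an n×n real symmetric positive semidefinite matrix with A ≠ 0 and B an n×n real symmetric positive definite matrix, and let λ₁ = max_{x≠0} (xᵀAx)/(xᵀBx). A point x ∈ ℝⁿ is a global minimizer of f(x) = xᵀBx − (xᵀAx)^{1/2} if and only if Ax = λ₁·Bx and xᵀBx = λ₁/4; moreover the global minimum value of f is −λ₁/4. -/
open Matrix

/-!
Write `a = xᵀAx` and `b = xᵀBx`. Maximality of `λ₁` says that `λ₁B - A` is positive semidefinite,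
so `a ≤ λ₁b` and `f x ≥ b - √(λ₁b) = (√b - √λ₁/2)² - λ₁/4 ≥ -λ₁/4`. Equality forces `b = λ₁/4` and
`xᵀ(λ₁B - A)x = 0`, which for a positive semidefinite matrix means `(λ₁B - A)x = 0`. A maximizer of
the Rayleigh quotient, rescaled to `zᵀBz = λ₁/4`, attains the bound.
-/

lemma sub_sqrt_mul_eq_sq_sub {l b : ℝ} (hl : 0 ≤ l) (hb : 0 ≤ b) :
    b - √(l * b) = (√b - √l / 2) ^ 2 - l / 4 := by
  rw [Real.sqrt_mul hl]
  linear_combination -(Real.sq_sqrt hb) - (Real.sq_sqrt hl) / 4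

lemma neg_div_four_le_sub_sqrt_mul {l b : ℝ} (hl : 0 ≤ l) (hb : 0 ≤ b) :
    -(l / 4) ≤ b - √(l * b) := by
  rw [sub_sqrt_mul_eq_sq_sub hl hb]
  linarith [sq_nonneg (√b - √l / 2)]

lemma sub_sqrt_mul_eq_neg_div_four_iff {l b : ℝ} (hl : 0 ≤ l) (hb : 0 ≤ b) :
    b - √(l * b) = -(l / 4) ↔ b = l / 4 := by
  have hl4 : √(l / 4) = √l / 2 := by
    rw [Real.sqrt_div' _ (by norm_num : (0 : ℝ) ≤ 4), show (4 : ℝ) = 2 ^ 2 by norm_num,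
      Real.sqrt_sq (by norm_num)]
  rw [sub_sqrt_mul_eq_sq_sub hl hb, sub_eq_neg_self, sq_eq_zero_iff, sub_eq_zero, ← hl4,
    Real.sqrt_inj hb (by positivity)]

lemma IsLeast.forall_le_iff_eq {α β : Type*} [PartialOrder β] {f : α → β} {m : β}
    (hm : IsLeast (Set.range f) m) (x : α) : (∀ y, f x ≤ f y) ↔ f x = m := by
  refine ⟨fun h => le_antisymm ?_ (hm.2 ⟨x, rfl⟩), fun h y => h ▸ hm.2 ⟨y, rfl⟩⟩
  obtain ⟨y, hy⟩ := hm.1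
  exact hy ▸ h y

namespace Matrix

variable {ι : Type*} [Fintype ι] {A B : Matrix ι ι ℝ} {l : ℝ}

def rayleighQuotients (A B : Matrix ι ι ℝ) : Set ℝ :=
  {r | ∃ z : ι → ℝ, z ≠ 0 ∧ r = (z ⬝ᵥ A *ᵥ z) / (z ⬝ᵥ B *ᵥ z)}

noncomputable def sqrtObjective (A B : Matrix ι ι ℝ) (x : ι → ℝ) : ℝ :=
  x ⬝ᵥ B *ᵥ x - √(x ⬝ᵥ A *ᵥ x)

lemma PosSemidef.dotProduct_mulVec_self_nonneg (hA : A.PosSemidef) (x : ι → ℝ) :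
    0 ≤ x ⬝ᵥ A *ᵥ x := by
  simpa using hA.dotProduct_mulVec_nonneg x

lemma PosDef.dotProduct_mulVec_self_pos (hB : B.PosDef) {x : ι → ℝ} (hx : x ≠ 0) :
    0 < x ⬝ᵥ B *ᵥ x := by
  simpa using hB.dotProduct_mulVec_pos hx

lemma dotProduct_smul_sub_mulVec (x : ι → ℝ) :
    x ⬝ᵥ (l • B - A) *ᵥ x = l * (x ⬝ᵥ B *ᵥ x) - x ⬝ᵥ A *ᵥ x := by
  rw [sub_mulVec, dotProduct_sub, smul_mulVec, dotProduct_smul, smul_eq_mul]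

lemma PosSemidef.dotProduct_mulVec_le_of_smul_sub (h : (l • B - A).PosSemidef) (x : ι → ℝ) :
    x ⬝ᵥ A *ᵥ x ≤ l * (x ⬝ᵥ B *ᵥ x) := by
  have := h.dotProduct_mulVec_self_nonneg x
  rw [dotProduct_smul_sub_mulVec] at this
  linarith

lemma PosSemidef.mulVec_eq_smul_of_smul_sub (h : (l • B - A).PosSemidef) {x : ι → ℝ}
    (hx : x ⬝ᵥ A *ᵥ x = l * (x ⬝ᵥ B *ᵥ x)) : A *ᵥ x = l • (B *ᵥ x) := by
  have := (h.dotProduct_mulVec_zero_iff x).1 <| by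
    rw [star_trivial, dotProduct_smul_sub_mulVec, hx, sub_self]
  rwa [sub_mulVec, smul_mulVec, sub_eq_zero, eq_comm] at this

lemma nonneg_of_mem_rayleighQuotients (hA : A.PosSemidef) (hB : B.PosDef)
    (hl : l ∈ rayleighQuotients A B) : 0 ≤ l := by
  obtain ⟨z, hz, rfl⟩ := hl
  exact div_nonneg (hA.dotProduct_mulVec_self_nonneg z) (hB.dotProduct_mulVec_self_pos hz).le

lemma posSemidef_smul_sub_of_mem_upperBounds (hA : A.IsHermitian) (hB : B.PosDef)
    (hl : l ∈ upperBounds (rayleighQuotients A B)) : (l • B - A).PosSemidef := by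
  refine .of_dotProduct_mulVec_nonneg ((hB.isHermitian.smul (.all l)).sub hA) fun z => ?_
  rw [star_trivial, dotProduct_smul_sub_mulVec, sub_nonneg]
  rcases eq_or_ne z 0 with rfl | hz
  · simp
  · exact (div_le_iff₀ (hB.dotProduct_mulVec_self_pos hz)).1 (hl ⟨z, hz, rfl⟩)

lemma neg_div_four_le_sqrtObjective (hB : B.PosSemidef) (hl : 0 ≤ l)
    (h : (l • B - A).PosSemidef) (x : ι → ℝ) : -(l / 4) ≤ sqrtObjective A B x :=
  calc -(l / 4) ≤ x ⬝ᵥ B *ᵥ x - √(l * (x ⬝ᵥ B *ᵥ x)) :=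
        neg_div_four_le_sub_sqrt_mul hl (hB.dotProduct_mulVec_self_nonneg x)
    _ ≤ sqrtObjective A B x := by
        unfold sqrtObjective
        gcongr
        exact h.dotProduct_mulVec_le_of_smul_sub x

lemma sqrtObjective_eq_neg_div_four_iff (hA : A.PosSemidef) (hB : B.PosSemidef) (hl : 0 ≤ l)
    (h : (l • B - A).PosSemidef) (x : ι → ℝ) :
    sqrtObjective A B x = -(l / 4) ↔ A *ᵥ x = l • (B *ᵥ x) ∧ x ⬝ᵥ B *ᵥ x = l / 4 := by
  have hb := hB.dotProduct_mulVec_self_nonneg x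
  have hab := h.dotProduct_mulVec_le_of_smul_sub x
  constructor
  · intro hx
    have hsqrt : √(x ⬝ᵥ A *ᵥ x) = √(l * (x ⬝ᵥ B *ᵥ x)) := by
      refine le_antisymm (Real.sqrt_le_sqrt hab) ?_
      have := neg_div_four_le_sub_sqrt_mul hl hb
      unfold sqrtObjective at hx
      linarith
    have heq : x ⬝ᵥ A *ᵥ x = l * (x ⬝ᵥ B *ᵥ x) :=
      (Real.sqrt_inj (hA.dotProduct_mulVec_self_nonneg x) (by positivity)).1 hsqrt
    refine ⟨h.mulVec_eq_smul_of_smul_sub heq, (sub_sqrt_mul_eq_neg_div_four_iff hl hb).1 ?_⟩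
    rwa [sqrtObjective, hsqrt] at hx
  · rintro ⟨hAx, hBx⟩
    rw [sqrtObjective, hAx, dotProduct_smul, smul_eq_mul,
      sub_sqrt_mul_eq_neg_div_four_iff hl hb]
    exact hBx

lemma exists_mulVec_eq_smul_and_dotProduct_eq (hB : B.PosDef)
    (h : (l • B - A).PosSemidef) (hl : l ∈ rayleighQuotients A B) (hl0 : 0 ≤ l) :
    ∃ x : ι → ℝ, A *ᵥ x = l • (B *ᵥ x) ∧ x ⬝ᵥ B *ᵥ x = l / 4 := by
  obtain ⟨z, hz, hlz⟩ := hl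
  have hb := hB.dotProduct_mulVec_self_pos hz
  have hAz : A *ᵥ z = l • (B *ᵥ z) :=
    h.mulVec_eq_smul_of_smul_sub (by rw [hlz, div_mul_cancel₀ _ hb.ne'])
  set c := √(l / (4 * (z ⬝ᵥ B *ᵥ z)))
  have hc : c ^ 2 = l / (4 * (z ⬝ᵥ B *ᵥ z)) := Real.sq_sqrt (by positivity)
  refine ⟨c • z, ?_, ?_⟩
  · rw [mulVec_smul, mulVec_smul, hAz, smul_comm]
  · rw [mulVec_smul, dotProduct_smul, smul_dotProduct, smul_eq_mul, smul_eq_mul, ← mul_assoc,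
      ← sq, hc]
    field_simp

end Matrix

theorem stmt_2_general {n : ℕ} (A B : Matrix (Fin n) (Fin n) ℝ)
    (hA : A.PosSemidef) (hB : B.PosDef) (lam1 : ℝ)
    (hlam : IsGreatest
      {r : ℝ | ∃ z : Fin n → ℝ, z ≠ 0 ∧ r = (z ⬝ᵥ A *ᵥ z) / (z ⬝ᵥ B *ᵥ z)} lam1) :
    (∀ x : Fin n → ℝ,
      ((∀ y : Fin n → ℝ,
          x ⬝ᵥ B *ᵥ x - Real.sqrt (x ⬝ᵥ A *ᵥ x) ≤ y ⬝ᵥ B *ᵥ y - Real.sqrt (y ⬝ᵥ A *ᵥ y)) ↔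
        (A *ᵥ x = lam1 • (B *ᵥ x) ∧ x ⬝ᵥ B *ᵥ x = lam1 / 4))) ∧
    IsLeast (Set.range fun x : Fin n → ℝ => x ⬝ᵥ B *ᵥ x - Real.sqrt (x ⬝ᵥ A *ᵥ x))
      (-(lam1 / 4)) := by
  have hlam0 : 0 ≤ lam1 := nonneg_of_mem_rayleighQuotients hA hB hlam.1
  have hgap : (lam1 • B - A).PosSemidef :=
    posSemidef_smul_sub_of_mem_upperBounds hA.isHermitian hB hlam.2
  have hiff := sqrtObjective_eq_neg_div_four_iff hA hB.posSemidef hlam0 hgap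
  have hleast : IsLeast (Set.range (sqrtObjective A B)) (-(lam1 / 4)) := by
    obtain ⟨x₀, hx₀⟩ := exists_mulVec_eq_smul_and_dotProduct_eq hB hgap hlam.1 hlam0
    exact ⟨⟨x₀, (hiff x₀).2 hx₀⟩,
      Set.forall_mem_range.2 (neg_div_four_le_sqrtObjective hB.posSemidef hlam0 hgap)⟩
  exact ⟨fun x => (hleast.forall_le_iff_eq x).trans (hiff x), hleast⟩

/-- `x` is a global minimizer of `f(x) = xᵀBx − √(xᵀAx)` iff `Ax = λ₁ Bx` and
`xᵀBx = λ₁/4`; moreover the global minimum value of `f` is `−λ₁/4`. -/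
theorem stmt_2 {n : ℕ} (A B : Matrix (Fin n) (Fin n) ℝ)
    (hA : A.PosSemidef) (hA0 : A ≠ 0) (hB : B.PosDef) (lam1 : ℝ)
    (hlam : IsGreatest
      {r : ℝ | ∃ z : Fin n → ℝ, z ≠ 0 ∧ r = (z ⬝ᵥ A *ᵥ z) / (z ⬝ᵥ B *ᵥ z)} lam1) :
    (∀ x : Fin n → ℝ,
      ((∀ y : Fin n → ℝ,
          x ⬝ᵥ B *ᵥ x - Real.sqrt (x ⬝ᵥ A *ᵥ x) ≤ y ⬝ᵥ B *ᵥ y - Real.sqrt (y ⬝ᵥ A *ᵥ y)) ↔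
        (A *ᵥ x = lam1 • (B *ᵥ x) ∧ x ⬝ᵥ B *ᵥ x = lam1 / 4))) ∧
    IsLeast (Set.range fun x : Fin n → ℝ => x ⬝ᵥ B *ᵥ x - Real.sqrt (x ⬝ᵥ A *ᵥ x))
      (-(lam1 / 4)) :=
  stmt_2_general A B hA hB lam1 hlam
end

section
/- Let A be an n×n real symmetric positive semidefinite matrix with A ≠ 0, B an n×n real symmetric positive definite matrix, and λ₁ = max_{x≠0} (xᵀAx)/(xᵀBx). Suppose x ∈ ℝⁿ is a stationary point of f that is not a global minimizer; that is, Ax ≠ 0, Ax = λ·Bx with λ = 2(xᵀAx)^{1/2}, and λ < λ₁. Then x is a strict saddle point: there exists a vector w ∈ ℝⁿ with wᵀ H_f(x) w < 0, where H_f(x) = 2B − A/(xᵀAx)^{1/2} + (Ax)(Ax)ᵀ/(xᵀAx)^{3/2} is the Hessian of f at x. -/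
open Matrix

/-!
Put `s = √(xᵀAx)`, so `λ = 2s`, and `M = A - λB`. On a vector `w` with `wᵀAx = 0` the rank-one
term of the Hessian vanishes and `wᵀH_f(x)w = -wᵀMw / s`. Since `Mx = 0` and `M` is symmetric,
`wᵀMw` is unchanged when `w` is moved along `x`; so for a maximizer `z` of the Rayleigh quotient
its `A`-orthogonal projection `w = z - c x` has `wᵀMw = zᵀMz = (λ₁ - λ) zᵀBz > 0`.
-/

namespace Matrix

section CommRing

variable {ι R : Type*} [Fintype ι] [CommRing R]

theorem IsSymm.dotProduct_mulVec_comm {M : Matrix ι ι R} (hM : M.IsSymm) (u v : ι → R) :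
    u ⬝ᵥ M *ᵥ v = v ⬝ᵥ M *ᵥ u := by
  rw [dotProduct_mulVec, ← mulVec_transpose, hM.eq, dotProduct_comm]

theorem IsSymm.dotProduct_mulVec_add_of_mulVec_eq_zero {M : Matrix ι ι R} (hM : M.IsSymm)
    {y : ι → R} (hy : M *ᵥ y = 0) (z : ι → R) :
    (z + y) ⬝ᵥ M *ᵥ (z + y) = z ⬝ᵥ M *ᵥ z := by
  rw [mulVec_add, hy, add_zero, add_dotProduct, hM.dotProduct_mulVec_comm y, hy, dotProduct_zero,
    add_zero]

theorem dotProduct_vecMulVec_mulVec (u v w : ι → R) :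
    w ⬝ᵥ vecMulVec u v *ᵥ w = (w ⬝ᵥ u) * (v ⬝ᵥ w) := by
  rw [vecMulVec_mulVec, op_smul_eq_smul, dotProduct_smul, smul_eq_mul, mul_comm]

end CommRing

section Field

variable {ι K : Type*} [Fintype ι] [Field K]

theorem exists_dotProduct_mulVec_eq_zero_and_sub_smul_eq {A B : Matrix ι ι K} (hA : A.IsSymm)
    (hB : B.IsSymm) {lam : K} {x : ι → K} (heig : A *ᵥ x = lam • (B *ᵥ x))
    (hx : x ⬝ᵥ A *ᵥ x ≠ 0) (z : ι → K) :
    ∃ w, w ⬝ᵥ A *ᵥ x = 0 ∧ w ⬝ᵥ (A - lam • B) *ᵥ w = z ⬝ᵥ (A - lam • B) *ᵥ z := by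
  refine ⟨z + (-(z ⬝ᵥ A *ᵥ x) / (x ⬝ᵥ A *ᵥ x)) • x, ?_, ?_⟩
  · rw [add_dotProduct, smul_dotProduct, smul_eq_mul, div_mul_cancel₀ _ hx, add_neg_cancel]
  · refine (hA.sub (hB.smul lam)).dotProduct_mulVec_add_of_mulVec_eq_zero ?_ z
    rw [mulVec_smul, sub_mulVec, smul_mulVec, heig, sub_self, smul_zero]

theorem dotProduct_two_smul_sub_inv_smul_add_vecMulVec_mulVec (A B : Matrix ι ι K) {s : K}
    (hs : s ≠ 0) (t : K) {u w : ι → K} (hw : w ⬝ᵥ u = 0) :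
    w ⬝ᵥ ((2 : K) • B - s⁻¹ • A + t • vecMulVec u u) *ᵥ w
      = -s⁻¹ * (w ⬝ᵥ (A - (2 * s) • B) *ᵥ w) := by
  have hsB : (2 : K) • B - s⁻¹ • A = -s⁻¹ • (A - (2 * s) • B) := by
    rw [smul_sub, smul_smul, neg_mul, mul_comm 2 s, inv_mul_cancel_left₀ hs, neg_smul, neg_smul,
      sub_neg_eq_add, neg_add_eq_sub]
  rw [add_mulVec, hsB, dotProduct_add, smul_mulVec, smul_mulVec, dotProduct_smul,
    dotProduct_smul, dotProduct_vecMulVec_mulVec, hw, zero_mul, smul_zero, add_zero, smul_eq_mul]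

end Field

theorem PosSemidef.dotProduct_mulVec_pos_of_mulVec_ne_zero {ι : Type*} [Fintype ι]
    {A : Matrix ι ι ℝ} (hA : A.PosSemidef) {x : ι → ℝ} (hx : A *ᵥ x ≠ 0) :
    0 < x ⬝ᵥ A *ᵥ x := by
  have hzero := hA.dotProduct_mulVec_zero_iff x
  rw [star_trivial] at hzero
  exact (hA.dotProduct_mulVec_nonneg x).lt_of_ne' (mt hzero.mp hx)

theorem PosDef.dotProduct_sub_smul_mulVec_pos_of_lt_div {ι : Type*} [Fintype ι]
    {A B : Matrix ι ι ℝ} (hB : B.PosDef) {z : ι → ℝ} (hz : z ≠ 0) {lam : ℝ}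
    (hlt : lam < (z ⬝ᵥ A *ᵥ z) / (z ⬝ᵥ B *ᵥ z)) :
    0 < z ⬝ᵥ (A - lam • B) *ᵥ z := by
  have hzBz : 0 < z ⬝ᵥ B *ᵥ z := by simpa using hB.dotProduct_mulVec_pos hz
  rw [sub_mulVec, dotProduct_sub, smul_mulVec, dotProduct_smul, smul_eq_mul, sub_pos]
  exact (lt_div_iff₀ hzBz).mp hlt

end Matrix

theorem stmt_3_general {n : ℕ} (A B : Matrix (Fin n) (Fin n) ℝ)
    (hA : A.PosSemidef) (hB : B.PosDef) (lam1 : ℝ)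
    (hlam : IsGreatest
      {r : ℝ | ∃ z : Fin n → ℝ, z ≠ 0 ∧ r = (z ⬝ᵥ A *ᵥ z) / (z ⬝ᵥ B *ᵥ z)} lam1)
    (x : Fin n → ℝ) (hx : A *ᵥ x ≠ 0) (lam : ℝ)
    (hlamdef : lam = 2 * Real.sqrt (x ⬝ᵥ A *ᵥ x))
    (heig : A *ᵥ x = lam • (B *ᵥ x)) (hlt : lam < lam1) :
    ∃ w : Fin n → ℝ,
      w ⬝ᵥ (((2 : ℝ) • B - (Real.sqrt (x ⬝ᵥ A *ᵥ x))⁻¹ • A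
        + ((Real.sqrt (x ⬝ᵥ A *ᵥ x)) ^ 3)⁻¹ • vecMulVec (A *ᵥ x) (A *ᵥ x)) *ᵥ w) < 0 := by
  obtain ⟨z, hz0, rfl⟩ := hlam.1
  have hxAx := hA.dotProduct_mulVec_pos_of_mulVec_ne_zero hx
  have hs : 0 < Real.sqrt (x ⬝ᵥ A *ᵥ x) := Real.sqrt_pos.2 hxAx
  obtain ⟨w, hwAx, hwM⟩ := exists_dotProduct_mulVec_eq_zero_and_sub_smul_eq
    (isHermitian_iff_isSymm.mp hA.1) (isHermitian_iff_isSymm.mp hB.1) heig hxAx.ne' z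
  refine ⟨w, ?_⟩
  rw [dotProduct_two_smul_sub_inv_smul_add_vecMulVec_mulVec A B hs.ne' _ hwAx, ← hlamdef, hwM,
    neg_mul, neg_lt_zero]
  exact mul_pos (inv_pos.2 hs) (hB.dotProduct_sub_smul_mulVec_pos_of_lt_div hz0 hlt)

/-- Every stationary point of `f(x) = xᵀBx − √(xᵀAx)` which is not a global minimizer
(i.e. a generalized eigenvector with eigenvalue `λ = 2√(xᵀAx) < λ₁`) is a strict saddle:
the Hessian `H_f(x) = 2B − A/√(xᵀAx) + (Ax)(Ax)ᵀ/(xᵀAx)^{3/2}` has a direction of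
negative curvature. -/
theorem stmt_3 {n : ℕ} (A B : Matrix (Fin n) (Fin n) ℝ)
    (hA : A.PosSemidef) (hA0 : A ≠ 0) (hB : B.PosDef) (lam1 : ℝ)
    (hlam : IsGreatest
      {r : ℝ | ∃ z : Fin n → ℝ, z ≠ 0 ∧ r = (z ⬝ᵥ A *ᵥ z) / (z ⬝ᵥ B *ᵥ z)} lam1)
    (x : Fin n → ℝ) (hx : A *ᵥ x ≠ 0) (lam : ℝ)
    (hlamdef : lam = 2 * Real.sqrt (x ⬝ᵥ A *ᵥ x))
    (heig : A *ᵥ x = lam • (B *ᵥ x)) (hlt : lam < lam1) :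
    ∃ w : Fin n → ℝ,
      w ⬝ᵥ (((2 : ℝ) • B - (Real.sqrt (x ⬝ᵥ A *ᵥ x))⁻¹ • A
        + ((Real.sqrt (x ⬝ᵥ A *ᵥ x)) ^ 3)⁻¹ • vecMulVec (A *ᵥ x) (A *ᵥ x)) *ᵥ w) < 0 :=
  stmt_3_general A B hA hB lam1 hlam x hx lam hlamdef heig hlt
end

section
/- Let A be an n×n real symmetric positive semidefinite matrix and B an n×n real symmetric positive definite matrix, and let λ₁(B) denote the largest eigenvalue of B. Then the constant L₊ = 2λ₁(B) is a positive Lipschitz constant for f: for every x ∈ ℝⁿ with xᵀAx > 0, the matrix 2λ₁(B)·I − H_f(x) is positive semidefinite, where H_f(x) = 2B − A/(xᵀAx)^{1/2} + (Ax)(Ax)ᵀ/(xᵀAx)^{3/2} is the Hessian of f at x. -/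
/-! `2λ₁(B)·I − H_f(x)` splits as `2 (λ₁(B)·I − B)` plus `s⁻³ (s² A − (Ax)(Ax)ᵀ)` with
`s² = xᵀAx`. The first summand is positive semidefinite because `λ₁(B)` bounds the spectrum
of `B`, the second by the Cauchy–Schwarz inequality `(yᵀAx)² ≤ (yᵀAy)(xᵀAx)` for the
semi-inner product defined by `A`. -/

open Matrix

theorem Matrix.PosSemidef.dotProduct_mulVec_sq_le {ι : Type*} [Fintype ι]
    {A : Matrix ι ι ℝ} (hA : A.PosSemidef) (x y : ι → ℝ) :
    (x ⬝ᵥ A *ᵥ y) ^ 2 ≤ (x ⬝ᵥ A *ᵥ x) * (y ⬝ᵥ A *ᵥ y) := by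
  let := A.toSeminormedAddCommGroup hA
  let := A.toInnerProductSpace hA
  have inner_eq (u v : ι → ℝ) : @inner ℝ _ _ u v = u ⬝ᵥ A *ᵥ v := by
    show (A *ᵥ v) ⬝ᵥ star u = _
    rw [star_trivial, dotProduct_comm]
  simpa only [sq, inner_eq] using real_inner_mul_inner_self_le x y

theorem Matrix.dotProduct_vecMulVec_mulVec_s5 {ι : Type*} [Fintype ι] (u v y : ι → ℝ) :
    y ⬝ᵥ vecMulVec u v *ᵥ y = (y ⬝ᵥ u) * (v ⬝ᵥ y) := by
  rw [dotProduct_mulVec, vecMul_vecMulVec, smul_dotProduct, smul_eq_mul]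

theorem Matrix.PosSemidef.dotProduct_mulVec_smul_sub_vecMulVec {ι : Type*} [Fintype ι]
    {A : Matrix ι ι ℝ} (hA : A.PosSemidef) (x : ι → ℝ) :
    ((x ⬝ᵥ A *ᵥ x) • A - vecMulVec (A *ᵥ x) (A *ᵥ x)).PosSemidef := by
  have hq : 0 ≤ x ⬝ᵥ A *ᵥ x := by simpa using hA.dotProduct_mulVec_nonneg x
  refine .of_dotProduct_mulVec_nonneg ?_ fun y => ?_
  · exact (hA.smul hq).isHermitian.sub (posSemidef_vecMulVec_self_star (A *ᵥ x)).isHermitian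
  · have hcs := hA.dotProduct_mulVec_sq_le y x
    simp only [star_trivial, sub_mulVec, smul_mulVec, dotProduct_sub, dotProduct_smul,
      smul_eq_mul, dotProduct_vecMulVec_mulVec_s5, dotProduct_comm (A *ᵥ x) y]
    rw [← sq, sub_nonneg, mul_comm]
    exact hcs

open scoped MatrixOrder ComplexOrder in
theorem Matrix.IsHermitian.posSemidef_smul_one_sub {ι 𝕜 : Type*} [Fintype ι] [DecidableEq ι]
    [RCLike 𝕜] {B : Matrix ι ι 𝕜} (hB : B.IsHermitian) {l : ℝ}
    (hl : ∀ μ ∈ spectrum ℝ B, μ ≤ l) : (l • (1 : Matrix ι ι 𝕜) - B).PosSemidef := by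
  rw [← Matrix.le_iff, ← Algebra.algebraMap_eq_smul_one]
  exact le_algebraMap_of_spectrum_le hl hB

/-- `L₊ = 2λ₁(B)` is a positive Lipschitz constant for `f`: for every `x` with `xᵀAx > 0`,
`2λ₁(B)·I − H_f(x)` is positive semidefinite, where
`H_f(x) = 2B − A/√(xᵀAx) + (Ax)(Ax)ᵀ/(xᵀAx)^{3/2}`. -/
theorem stmt_5 {n : ℕ} (A B : Matrix (Fin n) (Fin n) ℝ)
    (hA : A.PosSemidef) (hB : B.PosDef) (lamB : ℝ)
    (hlamB : IsGreatest (spectrum ℝ B) lamB)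
    (x : Fin n → ℝ) (hx : 0 < x ⬝ᵥ A *ᵥ x) :
    ((2 * lamB) • (1 : Matrix (Fin n) (Fin n) ℝ)
      - ((2 : ℝ) • B - (Real.sqrt (x ⬝ᵥ A *ᵥ x))⁻¹ • A
        + ((Real.sqrt (x ⬝ᵥ A *ᵥ x)) ^ 3)⁻¹ • vecMulVec (A *ᵥ x) (A *ᵥ x))).PosSemidef := by
  set s := Real.sqrt (x ⬝ᵥ A *ᵥ x)
  have hs : 0 < s := Real.sqrt_pos.mpr hx
  have hs2 : s ^ 2 = x ⬝ᵥ A *ᵥ x := Real.sq_sqrt hx.le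
  have hdecomp : (2 * lamB) • (1 : Matrix (Fin n) (Fin n) ℝ)
      - ((2 : ℝ) • B - s⁻¹ • A + (s ^ 3)⁻¹ • vecMulVec (A *ᵥ x) (A *ᵥ x))
      = (2 : ℝ) • (lamB • 1 - B)
        + (s ^ 3)⁻¹ • ((x ⬝ᵥ A *ᵥ x) • A - vecMulVec (A *ᵥ x) (A *ᵥ x)) := by
    have hinv : (s ^ 3)⁻¹ * (x ⬝ᵥ A *ᵥ x) = s⁻¹ := by
      rw [← hs2]
      field_simp
    rw [smul_sub (s ^ 3)⁻¹, smul_smul, hinv]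
    module
  rw [hdecomp]
  exact ((hB.isHermitian.posSemidef_smul_one_sub hlamB.2).smul zero_le_two).add
    ((hA.dotProduct_mulVec_smul_sub_vecMulVec x).smul (by positivity))
end

section
/- Let f : ℝⁿ → ℝ be twice continuously differentiable, bounded below, and satisfying ∇²f(x) ⪯ L₊·I for all x with L₊ > 0. Fix a stepsize α with 0 < α < 2/L₊ and define the gradient descent sequence x_{k+1} = x_k − α∇f(x_k) from any initial point x₀. Then the gradient norms converge to zero: ‖∇f(x_k)‖ → 0 as k → ∞. -/
/-!
A second-order bound `∇²f ⪯ L·I` gives the descent lemma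
`f (x + v) ≤ f x + ⟪∇f x, v⟫ + L/2 ‖v‖²`, so a gradient step of length `α < 2/L` lowers `f` by at
least `α (1 - Lα/2) ‖∇f x‖²`. Since `f` is bounded below these decreases telescope to a finite
sum, hence `∑ ‖∇f(x_k)‖² < ∞` and `‖∇f(x_k)‖ → 0`.
-/

open Filter

lemma le_add_deriv_add_of_hasDerivAt_two_le {g g' g'' : ℝ → ℝ} {M : ℝ}
    (hg : ∀ t, HasDerivAt g (g' t) t) (hg' : ∀ t, HasDerivAt g' (g'' t) t)
    (hM : ∀ t, g'' t ≤ M) :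
    g 1 ≤ g 0 + g' 0 + M / 2 := by
  -- `M t² / 2 - g t` is convex, so it lies above its tangent line at `0`.
  set h : ℝ → ℝ := fun t => M / 2 * t ^ 2 - g t
  have hh : ∀ t, HasDerivAt h (M * t - g' t) t := fun t =>
    (((hasDerivAt_pow 2 t).const_mul (M / 2)).fun_sub (hg t)).congr_deriv (by push_cast; ring)
  have hh' : ∀ t, HasDerivAt (fun t => M * t - g' t) (M - g'' t) t := fun t =>
    (((hasDerivAt_id' t).const_mul M).fun_sub (hg' t)).congr_deriv (by ring)
  have hconvex : ConvexOn ℝ Set.univ h := by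
    refine convexOn_of_hasDerivWithinAt2_nonneg convex_univ
      (fun t _ => (hh t).continuousAt.continuousWithinAt)
      (fun t _ => (hh t).hasDerivWithinAt) (fun t _ => (hh' t).hasDerivWithinAt) ?_
    exact fun t _ => sub_nonneg.2 (hM t)
  have htangent := hconvex.le_slope_of_hasDerivAt (Set.mem_univ 0) (Set.mem_univ 1)
    zero_lt_one (hh 0)
  simp only [slope_def_field, h] at htangent
  linarith

lemma le_add_fderiv_add_of_iteratedFDeriv_two_le {E : Type*} [NormedAddCommGroup E]
    [NormedSpace ℝ E] {f : E → ℝ} {L : ℝ} (hf : ContDiff ℝ 2 f)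
    (hhess : ∀ x v : E, iteratedFDeriv ℝ 2 f x ![v, v] ≤ L * ‖v‖ ^ 2) (x v : E) :
    f (x + v) ≤ f x + fderiv ℝ f x v + L / 2 * ‖v‖ ^ 2 := by
  have hf' : Differentiable ℝ f := hf.differentiable two_ne_zero
  have hf'' : Differentiable ℝ (fderiv ℝ f) :=
    (hf.fderiv_right (m := 1) le_rfl).differentiable one_ne_zero
  have hline : ∀ t : ℝ, HasDerivAt (fun s : ℝ => x + s • v) v t := fun t => by
    simpa using ((hasDerivAt_id t).smul_const v).const_add x
  have hg : ∀ t : ℝ, HasDerivAt (fun s => f (x + s • v)) (fderiv ℝ f (x + t • v) v) t :=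
    fun t => (hf' _).hasFDerivAt.comp_hasDerivAt t (hline t)
  have hg' : ∀ t : ℝ, HasDerivAt (fun s => fderiv ℝ f (x + s • v) v)
      (fderiv ℝ (fderiv ℝ f) (x + t • v) v v) t := fun t => by
    simpa using ((hf'' _).hasFDerivAt.comp_hasDerivAt t (hline t)).clm_apply
      (hasDerivAt_const t v)
  have hM : ∀ t : ℝ, fderiv ℝ (fderiv ℝ f) (x + t • v) v v ≤ L * ‖v‖ ^ 2 := fun t => by
    simpa [iteratedFDeriv_two_apply] using hhess (x + t • v) v
  simpa [mul_div_right_comm] using le_add_deriv_add_of_hasDerivAt_two_le hg hg' hM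

lemma apply_sub_smul_gradient_le {E : Type*} [NormedAddCommGroup E] [InnerProductSpace ℝ E]
    [CompleteSpace E] {f : E → ℝ} {L : ℝ} (hf : ContDiff ℝ 2 f)
    (hhess : ∀ x v : E, iteratedFDeriv ℝ 2 f x ![v, v] ≤ L * ‖v‖ ^ 2) (x : E) (α : ℝ) :
    f (x - α • gradient f x) ≤ f x - α * (1 - L * α / 2) * ‖gradient f x‖ ^ 2 := by
  have hdescent := le_add_fderiv_add_of_iteratedFDeriv_two_le hf hhess x (-(α • gradient f x))
  have hfderiv : fderiv ℝ f x (-(α • gradient f x)) = -(α * ‖gradient f x‖ ^ 2) := by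
    rw [← inner_gradient_left, inner_neg_right, real_inner_smul_right, real_inner_self_eq_norm_sq]
  rw [← sub_eq_add_neg, hfderiv, norm_neg, norm_smul, mul_pow, Real.norm_eq_abs, sq_abs]
    at hdescent
  linarith

lemma summable_of_le_sub_of_forall_le {a b : ℕ → ℝ} {c : ℝ} (hb : ∀ k, 0 ≤ b k)
    (hab : ∀ k, a (k + 1) ≤ a k - b k) (hc : ∀ k, c ≤ a k) : Summable b := by
  have htelescope : ∀ N, ∑ k ∈ Finset.range N, b k ≤ a 0 - a N := by
    intro N
    induction N with
    | zero => simp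
    | succ N ih =>
      rw [Finset.sum_range_succ]
      linarith [hab N]
  exact summable_of_sum_range_le (c := a 0 - c) hb fun N => (htelescope N).trans (by linarith [hc N])

theorem stmt_8_general {n : ℕ} (f : EuclideanSpace ℝ (Fin n) → ℝ) (L : ℝ) (hL : 0 < L)
    (hf : ContDiff ℝ 2 f)
    (hhess : ∀ x v : EuclideanSpace ℝ (Fin n),
      iteratedFDeriv ℝ 2 f x ![v, v] ≤ L * ‖v‖ ^ 2)
    (c : ℝ) (hbdd : ∀ x, c ≤ f x)
    (α : ℝ) (hα : 0 < α) (hα2 : α < 2 / L)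
    (x : ℕ → EuclideanSpace ℝ (Fin n))
    (hiter : ∀ k : ℕ, x (k + 1) = x k - α • gradient f (x k)) :
    Tendsto (fun k => ‖gradient f (x k)‖) atTop (nhds 0) := by
  have hδ : 0 < α * (1 - L * α / 2) := by
    have : L * α < 2 := by rwa [lt_div_iff₀ hL, mul_comm] at hα2
    nlinarith
  have hsummable : Summable fun k => ‖gradient f (x k)‖ ^ 2 := by
    refine (summable_mul_left_iff hδ.ne').1 (summable_of_le_sub_of_forall_le
      (fun k => by positivity) (fun k => ?_) (fun k => hbdd (x k)))
    simpa only [hiter, mul_assoc] using apply_sub_smul_gradient_le hf hhess (x k) α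
  simpa using hsummable.tendsto_atTop_zero.sqrt

/-- Convergence to stationary points: if `f` is C², bounded below, with `∇²f(x) ⪯ L₊·I`
everywhere (`L₊ > 0`), and `0 < α < 2/L₊`, then the gradient descent sequence
`x_{k+1} = x_k − α∇f(x_k)` satisfies `‖∇f(x_k)‖ → 0`. -/
theorem stmt_8 {n : ℕ} (f : EuclideanSpace ℝ (Fin n) → ℝ) (L : ℝ) (hL : 0 < L)
    (hf : ContDiff ℝ 2 f)
    (hhess : ∀ x v : EuclideanSpace ℝ (Fin n),
      iteratedFDeriv ℝ 2 f x ![v, v] ≤ L * ‖v‖ ^ 2)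
    (c : ℝ) (hbdd : ∀ x, c ≤ f x)
    (α : ℝ) (hα : 0 < α) (hα2 : α < 2 / L)
    (x : ℕ → EuclideanSpace ℝ (Fin n)) (x0 : EuclideanSpace ℝ (Fin n))
    (hx0 : x 0 = x0)
    (hiter : ∀ k : ℕ, x (k + 1) = x k - α • gradient f (x k)) :
    Tendsto (fun k => ‖gradient f (x k)‖) atTop (nhds 0) :=
  stmt_8_general f L hL hf hhess c hbdd α hα hα2 x hiter
end

section
/- Let A be an n×n real symmetric positive semidefinite matrix admitting a factorization A = FᵀF with F an m×n real matrix, and let B be an n×n real symmetric positive definite matrix. For any vectors u, v ∈ ℝᵐ with ‖u‖ ≤ 1, ‖v‖ ≤ 1, and uᵀv = 0, and any x ∈ ℝⁿ with xᵀAx > 0, the matrix H_x(u, v) = 2B − (1/(xᵀAx)^{1/2})·Fᵀ(uuᵀ + vvᵀ)F + (Ax)(Ax)ᵀ/(xᵀAx)^{3/2} satisfies H_x(u, v) ⪰ H_f(x), i.e., H_x(u, v) − H_f(x) is positive semidefinite, where H_f(x) = 2B − A/(xᵀAx)^{1/2} + (Ax)(Ax)ᵀ/(xᵀAx)^{3/2}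 is the Hessian of f at x. -/
open Matrix

/-!
The two Hessians differ by `Fᵀ (1 - uuᵀ - vvᵀ) F / √(xᵀAx)`, since `A = FᵀF`. The middle factor is
positive semidefinite by Bessel's inequality for the orthogonal pair `u, v` of norm at most one,
and congruence by `F` and scaling by a nonnegative number preserve semidefiniteness.
-/

-- Expand `0 ≤ ‖y - (u ⬝ᵥ y) • u - (v ⬝ᵥ y) • v‖²`.
theorem sq_dotProduct_add_sq_dotProduct_le {ι : Type*} [Fintype ι] {u v : ι → ℝ}
    (hu : u ⬝ᵥ u ≤ 1) (hv : v ⬝ᵥ v ≤ 1) (huv : u ⬝ᵥ v = 0) (y : ι → ℝ) :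
    (u ⬝ᵥ y) ^ 2 + (v ⬝ᵥ y) ^ 2 ≤ y ⬝ᵥ y := by
  set a := u ⬝ᵥ y
  set b := v ⬝ᵥ y
  have hresidual : 0 ≤ (y - a • u - b • v) ⬝ᵥ (y - a • u - b • v) :=
    Finset.sum_nonneg fun i _ => mul_self_nonneg _
  have hexpand : (y - a • u - b • v) ⬝ᵥ (y - a • u - b • v)
      = y ⬝ᵥ y - 2 * a ^ 2 - 2 * b ^ 2 + a ^ 2 * (u ⬝ᵥ u) + b ^ 2 * (v ⬝ᵥ v) := by
    simp only [sub_dotProduct, dotProduct_sub, smul_dotProduct, dotProduct_smul, smul_eq_mul,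
      dotProduct_comm y u, dotProduct_comm y v, dotProduct_comm v u, huv]
    ring
  nlinarith [mul_nonneg (sq_nonneg a) (sub_nonneg.mpr hu),
    mul_nonneg (sq_nonneg b) (sub_nonneg.mpr hv)]

theorem posSemidef_one_sub_vecMulVec_add_vecMulVec {ι : Type*} [Fintype ι] [DecidableEq ι]
    {u v : ι → ℝ} (hu : u ⬝ᵥ u ≤ 1) (hv : v ⬝ᵥ v ≤ 1) (huv : u ⬝ᵥ v = 0) :
    (1 - (vecMulVec u u + vecMulVec v v)).PosSemidef := by
  have hquad (w y : ι → ℝ) : y ⬝ᵥ vecMulVec w w *ᵥ y = (w ⬝ᵥ y) ^ 2 := by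
    rw [vecMulVec_mulVec, op_smul_eq_smul, dotProduct_smul, smul_eq_mul, dotProduct_comm, sq]
  refine posSemidef_iff_dotProduct_mulVec.mpr ⟨?_, fun y => ?_⟩
  · exact isHermitian_one.sub ((posSemidef_vecMulVec_self_star u).isHermitian.add
      (posSemidef_vecMulVec_self_star v).isHermitian)
  · simp only [star_trivial, sub_mulVec, add_mulVec, one_mulVec, dotProduct_sub, dotProduct_add,
      hquad]
    linarith [sq_dotProduct_add_sq_dotProduct_le hu hv huv y]

theorem stmt_14_general {n m : ℕ} (A B : Matrix (Fin n) (Fin n) ℝ)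
    (F : Matrix (Fin m) (Fin n) ℝ)
    (hAF : A = Fᵀ * F)
    (u v : Fin m → ℝ) (hu : u ⬝ᵥ u ≤ 1) (hv : v ⬝ᵥ v ≤ 1) (huv : u ⬝ᵥ v = 0)
    (x : Fin n → ℝ) :
    ((((2 : ℝ) • B - (Real.sqrt (x ⬝ᵥ A *ᵥ x))⁻¹ • (Fᵀ * (vecMulVec u u + vecMulVec v v) * F)
        + ((Real.sqrt (x ⬝ᵥ A *ᵥ x)) ^ 3)⁻¹ • vecMulVec (A *ᵥ x) (A *ᵥ x))
      - ((2 : ℝ) • B - (Real.sqrt (x ⬝ᵥ A *ᵥ x))⁻¹ • A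
        + ((Real.sqrt (x ⬝ᵥ A *ᵥ x)) ^ 3)⁻¹ • vecMulVec (A *ᵥ x) (A *ᵥ x)))).PosSemidef := by
  set s := Real.sqrt (x ⬝ᵥ A *ᵥ x)
  have hdiff : ((2 : ℝ) • B - s⁻¹ • (Fᵀ * (vecMulVec u u + vecMulVec v v) * F)
        + (s ^ 3)⁻¹ • vecMulVec (A *ᵥ x) (A *ᵥ x))
      - ((2 : ℝ) • B - s⁻¹ • A + (s ^ 3)⁻¹ • vecMulVec (A *ᵥ x) (A *ᵥ x))
      = s⁻¹ • (Fᴴ * (1 - (vecMulVec u u + vecMulVec v v)) * F) := by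
    rw [conjTranspose_eq_transpose_of_trivial, Matrix.mul_sub, Matrix.sub_mul, Matrix.mul_one,
      smul_sub, ← hAF]
    abel
  rw [hdiff]
  exact ((posSemidef_one_sub_vecMulVec_add_vecMulVec hu hv huv).conjTranspose_mul_mul_same F).smul
    (inv_nonneg.mpr (Real.sqrt_nonneg _))

/-- Splitting: for `A = FᵀF`, vectors `u, v` with `‖u‖ ≤ 1`, `‖v‖ ≤ 1`, `uᵀv = 0`, and
`x` with `xᵀAx > 0`, the split surrogate Hessian
`H_x(u, v) = 2B − Fᵀ(uuᵀ + vvᵀ)F/√(xᵀAx) + (Ax)(Ax)ᵀ/(xᵀAx)^{3/2}`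
dominates the Hessian `H_f(x)` in the Loewner order. -/
theorem stmt_14 {n m : ℕ} (A B : Matrix (Fin n) (Fin n) ℝ)
    (F : Matrix (Fin m) (Fin n) ℝ)
    (hA : A.PosSemidef) (hAF : A = Fᵀ * F) (hB : B.PosDef)
    (u v : Fin m → ℝ) (hu : u ⬝ᵥ u ≤ 1) (hv : v ⬝ᵥ v ≤ 1) (huv : u ⬝ᵥ v = 0)
    (x : Fin n → ℝ) (hx : 0 < x ⬝ᵥ A *ᵥ x) :
    ((((2 : ℝ) • B - (Real.sqrt (x ⬝ᵥ A *ᵥ x))⁻¹ • (Fᵀ * (vecMulVec u u + vecMulVec v v) * F)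
        + ((Real.sqrt (x ⬝ᵥ A *ᵥ x)) ^ 3)⁻¹ • vecMulVec (A *ᵥ x) (A *ᵥ x))
      - ((2 : ℝ) • B - (Real.sqrt (x ⬝ᵥ A *ᵥ x))⁻¹ • A
        + ((Real.sqrt (x ⬝ᵥ A *ᵥ x)) ^ 3)⁻¹ • vecMulVec (A *ᵥ x) (A *ᵥ x)))).PosSemidef :=
  stmt_14_general A B F hAF u v hu hv huv x
end

section
/- Let A = FᵀF be an n×n real symmetric positive semidefinite matrix (F an m×n real matrix), B an n×n real symmetric positive definite matrix, and x ∈ ℝⁿ with Fx ≠ 0. Set u = Fx/‖Fx‖ and let v ∈ ℝᵐ satisfy ‖v‖ ≤ 1 and uᵀv = 0. Then H_x(u, v) = 2B − (1/(xᵀAx)^{1/2})·(Fᵀv)(Fᵀv)ᵀ, and the Loewner chain 2λ₁(B)·I ⪰ 2B ⪰ H_x(u, v) ⪰ H_f(x) holds, where λ₁(B) is the largest eigenvalue of B and H_f(x) = 2B − A/(xᵀAx)^{1/2} + (Ax)(Ax)ᵀ/(xᵀAx)^{3/2} is the Hessian of f at x. -/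
/-!
Writing `Fx = ‖Fx‖ u`, the `u`-part of `Fᵀ(uuᵀ + vvᵀ)F` is exactly `(Ax)(Ax)ᵀ/(xᵀAx)`, which cancels
the rank-one term of the surrogate. The gap to the true Hessian is then
`Fᵀ(I − uuᵀ − vvᵀ)F / ‖Fx‖`, positive semidefinite because Bessel's inequality
`(uᵀz)² + (vᵀz)² ≤ ‖z‖²` holds for orthogonal `u`, `v` of length at most one. The bound
`B ⪯ λ₁(B) I` is the continuous functional calculus applied to the identity on the spectrum.
-/

open Matrix

namespace Matrix

variable {ι l : Type*} [Fintype ι]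

theorem dotProduct_self_nonneg (w : ι → ℝ) : 0 ≤ w ⬝ᵥ w :=
  star_trivial w ▸ dotProduct_self_star_nonneg w

theorem transpose_mul_vecMulVec_mul {R : Type*} [CommSemiring R] (F : Matrix ι l R)
    (a b : ι → R) : Fᵀ * vecMulVec a b * F = vecMulVec (Fᵀ *ᵥ a) (Fᵀ *ᵥ b) := by
  rw [mul_vecMulVec, vecMulVec_mul, mulVec_transpose, mulVec_transpose]

theorem dotProduct_transpose_mul_self_mulVec (F : Matrix ι l ℝ) [Fintype l] (x : l → ℝ) :
    x ⬝ᵥ (Fᵀ * F) *ᵥ x = (F *ᵥ x) ⬝ᵥ (F *ᵥ x) := by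
  rw [← mulVec_mulVec, dotProduct_mulVec, vecMul_transpose]

theorem dotProduct_self_inv_sqrt_smul_le_one (w : ι → ℝ) :
    ((√(w ⬝ᵥ w))⁻¹ • w) ⬝ᵥ ((√(w ⬝ᵥ w))⁻¹ • w) ≤ 1 := by
  rw [dotProduct_smul, smul_dotProduct, smul_smul, smul_eq_mul, ← mul_inv, ← sq,
    Real.sq_sqrt (dotProduct_self_nonneg w)]
  exact inv_mul_le_one_of_le₀ le_rfl (dotProduct_self_nonneg w)

theorem transpose_mul_vecMulVec_inv_sqrt_smul_mul (F : Matrix ι l ℝ) (w : ι → ℝ) :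
    Fᵀ * vecMulVec ((√(w ⬝ᵥ w))⁻¹ • w) ((√(w ⬝ᵥ w))⁻¹ • w) * F
      = (w ⬝ᵥ w)⁻¹ • vecMulVec (Fᵀ *ᵥ w) (Fᵀ *ᵥ w) := by
  rw [transpose_mul_vecMulVec_mul, mulVec_smul, smul_vecMulVec, vecMulVec_smul,
    smul_smul, ← mul_inv, ← sq, Real.sq_sqrt (dotProduct_self_nonneg w)]

theorem sq_dotProduct_add_sq_dotProduct_le {u v : ι → ℝ} (huv : u ⬝ᵥ v = 0) (hu : u ⬝ᵥ u ≤ 1)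
    (hv : v ⬝ᵥ v ≤ 1) (z : ι → ℝ) : (u ⬝ᵥ z) ^ 2 + (v ⬝ᵥ z) ^ 2 ≤ z ⬝ᵥ z := by
  set a := u ⬝ᵥ z
  set b := v ⬝ᵥ z
  have hresidual : 0 ≤ (z - a • u - b • v) ⬝ᵥ (z - a • u - b • v) := dotProduct_self_nonneg _
  have hexpand : (z - a • u - b • v) ⬝ᵥ (z - a • u - b • v)
      = z ⬝ᵥ z - a ^ 2 * (2 - u ⬝ᵥ u) - b ^ 2 * (2 - v ⬝ᵥ v) := by
    simp only [dotProduct_sub, sub_dotProduct, dotProduct_smul, smul_dotProduct, smul_eq_mul,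
      dotProduct_comm z u, dotProduct_comm z v, dotProduct_comm v u, huv]
    ring
  nlinarith [sq_nonneg a, sq_nonneg b]

theorem posSemidef_one_sub_vecMulVec_sub_vecMulVec [DecidableEq ι] {u v : ι → ℝ}
    (huv : u ⬝ᵥ v = 0) (hu : u ⬝ᵥ u ≤ 1) (hv : v ⬝ᵥ v ≤ 1) :
    (1 - vecMulVec u u - vecMulVec v v).PosSemidef := by
  refine .of_dotProduct_mulVec_nonneg ?_ fun z => ?_
  · have hsym (w : ι → ℝ) : (vecMulVec w w).IsHermitian := by
      simpa using (posSemidef_vecMulVec_self_star w).isHermitian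
    exact (isHermitian_one.sub (hsym u)).sub (hsym v)
  · rw [star_trivial, sub_mulVec, sub_mulVec, one_mulVec, vecMulVec_mulVec, vecMulVec_mulVec]
    simp only [dotProduct_sub, op_smul_eq_smul, dotProduct_smul, smul_eq_mul, dotProduct_comm z u,
      dotProduct_comm z v]
    linarith [sq_dotProduct_add_sq_dotProduct_le huv hu hv z]

theorem posSemidef_smul_one_sub_of_spectrum_le [DecidableEq ι] {B : Matrix ι ι ℝ}
    (hB : B.IsHermitian) {r : ℝ} (h : r ∈ upperBounds (spectrum ℝ B)) : (r • 1 - B).PosSemidef := by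
  open scoped MatrixOrder in
  simpa [le_iff, Algebra.algebraMap_eq_smul_one] using
    le_algebraMap_of_spectrum_le h hB.isSelfAdjoint

end Matrix

theorem stmt_15_general {n m : ℕ} (A B : Matrix (Fin n) (Fin n) ℝ)
    (F : Matrix (Fin m) (Fin n) ℝ)
    (hAF : A = Fᵀ * F) (hB : B.PosDef)
    (lamB : ℝ) (hlamB : IsGreatest (spectrum ℝ B) lamB)
    (x : Fin n → ℝ)
    (u v : Fin m → ℝ)
    (hu : u = (Real.sqrt ((F *ᵥ x) ⬝ᵥ (F *ᵥ x)))⁻¹ • (F *ᵥ x))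
    (hv : v ⬝ᵥ v ≤ 1) (huv : u ⬝ᵥ v = 0) :
    ((2 : ℝ) • B - (Real.sqrt (x ⬝ᵥ A *ᵥ x))⁻¹ • (Fᵀ * (vecMulVec u u + vecMulVec v v) * F)
        + ((Real.sqrt (x ⬝ᵥ A *ᵥ x)) ^ 3)⁻¹ • vecMulVec (A *ᵥ x) (A *ᵥ x)
      = (2 : ℝ) • B - (Real.sqrt (x ⬝ᵥ A *ᵥ x))⁻¹ • vecMulVec (Fᵀ *ᵥ v) (Fᵀ *ᵥ v)) ∧
    ((2 * lamB) • (1 : Matrix (Fin n) (Fin n) ℝ) - (2 : ℝ) • B).PosSemidef ∧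
    ((2 : ℝ) • B -
      ((2 : ℝ) • B - (Real.sqrt (x ⬝ᵥ A *ᵥ x))⁻¹ •
        vecMulVec (Fᵀ *ᵥ v) (Fᵀ *ᵥ v))).PosSemidef ∧
    (((2 : ℝ) • B - (Real.sqrt (x ⬝ᵥ A *ᵥ x))⁻¹ • vecMulVec (Fᵀ *ᵥ v) (Fᵀ *ᵥ v))
      - ((2 : ℝ) • B - (Real.sqrt (x ⬝ᵥ A *ᵥ x))⁻¹ • A
        + ((Real.sqrt (x ⬝ᵥ A *ᵥ x)) ^ 3)⁻¹ • vecMulVec (A *ᵥ x) (A *ᵥ x))).PosSemidef := by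
  have hAx : A *ᵥ x = Fᵀ *ᵥ (F *ᵥ x) := by rw [hAF, mulVec_mulVec]
  have hxAx : x ⬝ᵥ A *ᵥ x = (F *ᵥ x) ⬝ᵥ (F *ᵥ x) := by
    rw [hAF, dotProduct_transpose_mul_self_mulVec]
  set s := √(x ⬝ᵥ A *ᵥ x)
  have hs3 : s ^ 3 = s * (x ⬝ᵥ A *ᵥ x) := by
    rw [pow_succ', Real.sq_sqrt (hxAx ▸ dotProduct_self_nonneg _)]
  have hmerge : (2 : ℝ) • B - s⁻¹ • (Fᵀ * (vecMulVec u u + vecMulVec v v) * F)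
      + (s ^ 3)⁻¹ • vecMulVec (A *ᵥ x) (A *ᵥ x)
      = (2 : ℝ) • B - s⁻¹ • vecMulVec (Fᵀ *ᵥ v) (Fᵀ *ᵥ v) := by
    rw [Matrix.mul_add, Matrix.add_mul, hu, transpose_mul_vecMulVec_inv_sqrt_smul_mul,
      transpose_mul_vecMulVec_mul F v, ← hAx, ← hxAx, smul_add, smul_smul, ← mul_inv, ← hs3]
    abel
  have hu_le : u ⬝ᵥ u ≤ 1 := hu ▸ dotProduct_self_inv_sqrt_smul_le_one _
  refine ⟨hmerge, ?_, ?_, ?_⟩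
  · rw [mul_smul, ← smul_sub]
    exact (posSemidef_smul_one_sub_of_spectrum_le hB.isHermitian hlamB.2).smul zero_le_two
  · rw [sub_sub_cancel]
    have hvv := posSemidef_vecMulVec_self_star (Fᵀ *ᵥ v)
    rw [star_trivial] at hvv
    exact hvv.smul (inv_nonneg.2 (Real.sqrt_nonneg _))
  · have hgap : A - Fᵀ * (vecMulVec u u + vecMulVec v v) * F
        = Fᴴ * (1 - vecMulVec u u - vecMulVec v v) * F := by
      rw [conjTranspose_eq_transpose_of_trivial, hAF, sub_sub, Matrix.mul_sub, Matrix.sub_mul,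
        Matrix.mul_one]
    rw [← hmerge, add_sub_add_right_eq_sub, sub_sub_sub_cancel_left, ← smul_sub, hgap]
    exact ((posSemidef_one_sub_vecMulVec_sub_vecMulVec huv hu_le hv).conjTranspose_mul_mul_same
      F).smul (inv_nonneg.2 (Real.sqrt_nonneg _))

/-- Merging the `u`-term: with `u = Fx/‖Fx‖` and `v ⊥ u`, `‖v‖ ≤ 1`, the split surrogate
Hessian simplifies to `H_x(u, v) = 2B − (Fᵀv)(Fᵀv)ᵀ/√(xᵀAx)`, and the Loewner chain
`2λ₁(B)I ⪰ 2B ⪰ H_x(u, v) ⪰ H_f(x)` holds. -/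
theorem stmt_15 {n m : ℕ} (A B : Matrix (Fin n) (Fin n) ℝ)
    (F : Matrix (Fin m) (Fin n) ℝ)
    (hA : A.PosSemidef) (hAF : A = Fᵀ * F) (hB : B.PosDef)
    (lamB : ℝ) (hlamB : IsGreatest (spectrum ℝ B) lamB)
    (x : Fin n → ℝ) (hFx : F *ᵥ x ≠ 0)
    (u v : Fin m → ℝ)
    (hu : u = (Real.sqrt ((F *ᵥ x) ⬝ᵥ (F *ᵥ x)))⁻¹ • (F *ᵥ x))
    (hv : v ⬝ᵥ v ≤ 1) (huv : u ⬝ᵥ v = 0) :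
    ((2 : ℝ) • B - (Real.sqrt (x ⬝ᵥ A *ᵥ x))⁻¹ • (Fᵀ * (vecMulVec u u + vecMulVec v v) * F)
        + ((Real.sqrt (x ⬝ᵥ A *ᵥ x)) ^ 3)⁻¹ • vecMulVec (A *ᵥ x) (A *ᵥ x)
      = (2 : ℝ) • B - (Real.sqrt (x ⬝ᵥ A *ᵥ x))⁻¹ • vecMulVec (Fᵀ *ᵥ v) (Fᵀ *ᵥ v)) ∧
    ((2 * lamB) • (1 : Matrix (Fin n) (Fin n) ℝ) - (2 : ℝ) • B).PosSemidef ∧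
    ((2 : ℝ) • B -
      ((2 : ℝ) • B - (Real.sqrt (x ⬝ᵥ A *ᵥ x))⁻¹ •
        vecMulVec (Fᵀ *ᵥ v) (Fᵀ *ᵥ v))).PosSemidef ∧
    (((2 : ℝ) • B - (Real.sqrt (x ⬝ᵥ A *ᵥ x))⁻¹ • vecMulVec (Fᵀ *ᵥ v) (Fᵀ *ᵥ v))
      - ((2 : ℝ) • B - (Real.sqrt (x ⬝ᵥ A *ᵥ x))⁻¹ • A
        + ((Real.sqrt (x ⬝ᵥ A *ᵥ x)) ^ 3)⁻¹ • vecMulVec (A *ᵥ x) (A *ᵥ x))).PosSemidef :=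
  stmt_15_general A B F hAF hB lamB hlamB x u v hu hv huv
end

section
/- Let A = FᵀF be an n×n real symmetric positive semidefinite matrix (F an m×n real matrix), B an n×n real symmetric positive definite matrix, x ∈ ℝⁿ with Ax ≠ 0, and ρ ≥ 1. Let v ∈ ℝᵐ satisfy vᵀFx = 0, vᵀv = 1/ρ, and σ := 1 − (vᵀFB⁻¹Fᵀv)/(2(xᵀAx)^{1/2}) > 0. Let g = 2Bx − Ax/(xᵀAx)^{1/2}, H = 2B − (1/(xᵀAx)^{1/2})·(Fᵀv)(Fᵀv)ᵀ, q = FB⁻¹Ax, D = qqᵀ, and C = ρI − FB⁻¹Fᵀ/(2(xᵀAx)^{1/2}). Then vᵀCv = σ > 0 and gᵀH⁻¹g = ½·gᵀB⁻¹g + (1/(4(xᵀAx)^{3/2}))·(vᵀDv)/(vᵀCv); consequently, over the constraint set Ω = {v : vᵀFx = 0, vᵀv = 1/ρ}, maximizing the surrogate decrease gᵀH⁻¹g is equivalent to maximizing the generalized Rayleigh quotient (vᵀDv)/(vᵀCv). -/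
/-!
The surrogate Hessian `H = 2B - s⁻¹ (Fᵀv)(Fᵀv)ᵀ`, `s = (xᵀAx)^{1/2}`, is a rank-one update of `2B`,
so the Sherman–Morrison formula gives
`gᵀH⁻¹g = ½ gᵀB⁻¹g + (vᵀFB⁻¹g)² / (4sσ)`.
Since `FB⁻¹g = 2Fx - q/s` and `vᵀFx = 0`, the numerator is `(vᵀq)²/s² = vᵀDv/s²`, and
`vᵀv = 1/ρ` turns `vᵀCv` into `σ`. As `s > 0`, the decrease is an increasing affine function of the
Rayleigh quotient `vᵀDv / vᵀCv`.
-/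

namespace Matrix

variable {n m K : Type*} [Fintype n] [Fintype m]

theorem dotProduct_transpose_mul_self_mulVec_pos {R : Type*} [CommRing R] [LinearOrder R]
    [IsStrictOrderedRing R] (F : Matrix m n R) {x : n → R} (hx : (Fᵀ * F) *ᵥ x ≠ 0) :
    0 < x ⬝ᵥ (Fᵀ * F) *ᵥ x := by
  have hFx : F *ᵥ x ≠ 0 := fun h => hx (by rw [← mulVec_mulVec, h, mulVec_zero])
  rw [← mulVec_mulVec, dotProduct_transpose_mulVec]
  exact lt_of_le_of_ne' (Finset.sum_nonneg fun i _ => mul_self_nonneg _)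
    (dotProduct_self_eq_zero.not.mpr hFx)

variable [DecidableEq n] [Field K]

theorem inv_add_vecMulVec {B : Matrix n n K} (hB : IsUnit B.det) (a b : n → K)
    (h : 1 + b ⬝ᵥ B⁻¹ *ᵥ a ≠ 0) :
    (B + vecMulVec a b)⁻¹ =
      B⁻¹ - (1 + b ⬝ᵥ B⁻¹ *ᵥ a)⁻¹ • vecMulVec (B⁻¹ *ᵥ a) (b ᵥ* B⁻¹) := by
  refine inv_eq_right_inv ?_
  rw [add_mul, mul_sub, mul_sub, mul_nonsing_inv B hB, Matrix.mul_smul, Matrix.mul_smul,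
    mul_vecMulVec, mul_vecMulVec, mulVec_mulVec, mul_nonsing_inv B hB, one_mulVec,
    vecMulVec_mul, vecMulVec_mulVec, op_smul_eq_smul, smul_vecMulVec]
  calc _ = 1 + (1 - (1 + b ⬝ᵥ B⁻¹ *ᵥ a)⁻¹ * (1 + b ⬝ᵥ B⁻¹ *ᵥ a)) •
        vecMulVec a (b ᵥ* B⁻¹) := by module
    _ = 1 := by rw [inv_mul_cancel₀ h, sub_self, zero_smul, add_zero]

theorem dotProduct_inv_sub_smul_vecMulVec_self_mulVec {B : Matrix n n K} (hB : IsUnit B.det)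
    (hBs : B.IsSymm) (c : K) (p g : n → K) (h : 1 - c * (p ⬝ᵥ B⁻¹ *ᵥ p) ≠ 0) :
    g ⬝ᵥ (B - c • vecMulVec p p)⁻¹ *ᵥ g =
      g ⬝ᵥ B⁻¹ *ᵥ g + c * (g ⬝ᵥ B⁻¹ *ᵥ p) ^ 2 / (1 - c * (p ⬝ᵥ B⁻¹ *ᵥ p)) := by
  have hpg : p ᵥ* B⁻¹ ⬝ᵥ g = g ⬝ᵥ B⁻¹ *ᵥ p := by
    rw [← dotProduct_mulVec, ← dotProduct_transpose_mulVec B⁻¹ p g, hBs.inv.eq]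
  have ht : 1 + p ⬝ᵥ B⁻¹ *ᵥ (-c • p) = 1 - c * (p ⬝ᵥ B⁻¹ *ᵥ p) := by
    rw [mulVec_smul, dotProduct_smul, smul_eq_mul]; ring
  have hH : B - c • vecMulVec p p = B + vecMulVec (-c • p) p := by
    rw [neg_smul, neg_vecMulVec, smul_vecMulVec, sub_eq_add_neg]
  rw [hH, inv_add_vecMulVec hB _ _ (ht ▸ h), ht,
    sub_mulVec, smul_mulVec, vecMulVec_mulVec, op_smul_eq_smul, hpg, dotProduct_sub,
    dotProduct_smul, dotProduct_smul, mulVec_smul, dotProduct_smul, smul_eq_mul, smul_eq_mul,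
    smul_eq_mul]
  ring

def surrogateHessian (B : Matrix n n K) (F : Matrix m n K) (s : K) (v : m → K) : Matrix n n K :=
  (2 : K) • B - s⁻¹ • vecMulVec (Fᵀ *ᵥ v) (Fᵀ *ᵥ v)

theorem dotProduct_surrogateHessian_inv_mulVec [CharZero K] {B : Matrix n n K}
    (hB : IsUnit B.det) (hBs : B.IsSymm) (F : Matrix m n K) (s : K) (v : m → K) (g : n → K)
    (hσ : 1 - v ⬝ᵥ (F * B⁻¹ * Fᵀ) *ᵥ v / (2 * s) ≠ 0) :
    g ⬝ᵥ (surrogateHessian B F s v)⁻¹ *ᵥ g =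
      1 / 2 * (g ⬝ᵥ B⁻¹ *ᵥ g) +
        (4 * s)⁻¹ * (v ⬝ᵥ F *ᵥ B⁻¹ *ᵥ g) ^ 2 / (1 - v ⬝ᵥ (F * B⁻¹ * Fᵀ) *ᵥ v / (2 * s)) := by
  have h2B : ((2 : K) • B)⁻¹ = (2 : K)⁻¹ • B⁻¹ := by
    have := invertibleOfNonzero (two_ne_zero : (2 : K) ≠ 0)
    rw [inv_smul (A := B) (2 : K) hB, invOf_eq_inv]
  have hFB (w : n → K) : w ⬝ᵥ B⁻¹ *ᵥ (Fᵀ *ᵥ v) = v ⬝ᵥ F *ᵥ B⁻¹ *ᵥ w := by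
    rw [← dotProduct_transpose_mulVec, hBs.inv.eq, dotProduct_comm, dotProduct_transpose_mulVec]
  have h2Bu : IsUnit ((2 : K) • B).det := by
    rw [det_smul]
    exact ((two_ne_zero : (2 : K) ≠ 0).isUnit.pow _).mul hB
  have hden : s⁻¹ * (Fᵀ *ᵥ v ⬝ᵥ ((2 : K) • B)⁻¹ *ᵥ Fᵀ *ᵥ v) =
      v ⬝ᵥ (F * B⁻¹ * Fᵀ) *ᵥ v / (2 * s) := by
    rw [h2B, smul_mulVec, dotProduct_smul, hFB, ← mulVec_mulVec, ← mulVec_mulVec, smul_eq_mul]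
    ring
  rw [surrogateHessian, dotProduct_inv_sub_smul_vecMulVec_self_mulVec h2Bu (hBs.smul 2) _ _ _
    (hden ▸ hσ), hden, h2B, smul_mulVec, smul_mulVec, dotProduct_smul, dotProduct_smul, hFB,
    smul_eq_mul, smul_eq_mul]
  ring

theorem dotProduct_mulVec_inv_mulVec_gradient {B : Matrix n n K} (hB : IsUnit B.det)
    (F : Matrix m n K) (A : Matrix n n K) (x : n → K) (s : K) {w : m → K}
    (hw : w ⬝ᵥ F *ᵥ x = 0) :
    w ⬝ᵥ F *ᵥ B⁻¹ *ᵥ ((2 : K) • (B *ᵥ x) - s⁻¹ • (A *ᵥ x)) =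
      -(s⁻¹ * (w ⬝ᵥ F *ᵥ B⁻¹ *ᵥ A *ᵥ x)) := by
  rw [mulVec_sub, mulVec_smul, mulVec_mulVec, nonsing_inv_mul B hB, one_mulVec]
  simp only [mulVec_sub, mulVec_smul, dotProduct_sub, dotProduct_smul, hw, smul_eq_mul]
  ring

theorem dotProduct_smul_one_sub_smul_mulVec [DecidableEq m] {ρ : K} (hρ : ρ ≠ 0) (c : K)
    (M : Matrix m m K) {w : m → K} (hw : w ⬝ᵥ w = 1 / ρ) :
    w ⬝ᵥ (ρ • (1 : Matrix m m K) - c • M) *ᵥ w = 1 - c * (w ⬝ᵥ M *ᵥ w) := by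
  rw [sub_mulVec, smul_mulVec, smul_mulVec, one_mulVec, dotProduct_sub, dotProduct_smul,
    dotProduct_smul, hw, smul_eq_mul, smul_eq_mul, mul_one_div_cancel hρ]

end Matrix

open Matrix

theorem stmt_17_general {n m : ℕ} (A B : Matrix (Fin n) (Fin n) ℝ)
    (F : Matrix (Fin m) (Fin n) ℝ)
    (hAF : A = Fᵀ * F) (hB : B.PosDef)
    (x : Fin n → ℝ) (hx : A *ᵥ x ≠ 0) (ρ : ℝ) (hρ : 1 ≤ ρ)
    (g : Fin n → ℝ)
    (hg : g = (2 : ℝ) • (B *ᵥ x) - (Real.sqrt (x ⬝ᵥ A *ᵥ x))⁻¹ • (A *ᵥ x))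
    (q : Fin m → ℝ) (hq : q = F *ᵥ (B⁻¹ *ᵥ (A *ᵥ x)))
    (D C : Matrix (Fin m) (Fin m) ℝ) (hD : D = vecMulVec q q)
    (hC : C = ρ • (1 : Matrix (Fin m) (Fin m) ℝ)
      - (2 * Real.sqrt (x ⬝ᵥ A *ᵥ x))⁻¹ • (F * B⁻¹ * Fᵀ))
    (v : Fin m → ℝ) (hvFx : v ⬝ᵥ (F *ᵥ x) = 0) (hvv : v ⬝ᵥ v = 1 / ρ)
    (σ : ℝ)
    (hσdef : σ = 1 - (v ⬝ᵥ (F * B⁻¹ * Fᵀ) *ᵥ v) / (2 * Real.sqrt (x ⬝ᵥ A *ᵥ x)))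
    (hσ : 0 < σ) :
    v ⬝ᵥ C *ᵥ v = σ ∧
    g ⬝ᵥ ((2 : ℝ) • B - (Real.sqrt (x ⬝ᵥ A *ᵥ x))⁻¹ •
        vecMulVec (Fᵀ *ᵥ v) (Fᵀ *ᵥ v))⁻¹ *ᵥ g =
      (1 / 2 : ℝ) * (g ⬝ᵥ B⁻¹ *ᵥ g)
        + (4 * (Real.sqrt (x ⬝ᵥ A *ᵥ x)) ^ 3)⁻¹ * ((v ⬝ᵥ D *ᵥ v) / (v ⬝ᵥ C *ᵥ v)) ∧
    ∀ v₁ v₂ : Fin m → ℝ,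
      (v₁ ⬝ᵥ (F *ᵥ x) = 0 ∧ v₁ ⬝ᵥ v₁ = 1 / ρ ∧
        0 < 1 - (v₁ ⬝ᵥ (F * B⁻¹ * Fᵀ) *ᵥ v₁) / (2 * Real.sqrt (x ⬝ᵥ A *ᵥ x))) →
      (v₂ ⬝ᵥ (F *ᵥ x) = 0 ∧ v₂ ⬝ᵥ v₂ = 1 / ρ ∧
        0 < 1 - (v₂ ⬝ᵥ (F * B⁻¹ * Fᵀ) *ᵥ v₂) / (2 * Real.sqrt (x ⬝ᵥ A *ᵥ x))) →
      (g ⬝ᵥ ((2 : ℝ) • B - (Real.sqrt (x ⬝ᵥ A *ᵥ x))⁻¹ •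
            vecMulVec (Fᵀ *ᵥ v₁) (Fᵀ *ᵥ v₁))⁻¹ *ᵥ g ≤
        g ⬝ᵥ ((2 : ℝ) • B - (Real.sqrt (x ⬝ᵥ A *ᵥ x))⁻¹ •
            vecMulVec (Fᵀ *ᵥ v₂) (Fᵀ *ᵥ v₂))⁻¹ *ᵥ g ↔
        (v₁ ⬝ᵥ D *ᵥ v₁) / (v₁ ⬝ᵥ C *ᵥ v₁) ≤ (v₂ ⬝ᵥ D *ᵥ v₂) / (v₂ ⬝ᵥ C *ᵥ v₂)) := by
  set s := Real.sqrt (x ⬝ᵥ A *ᵥ x)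
  have hs : 0 < s :=
    Real.sqrt_pos.mpr (hAF ▸ dotProduct_transpose_mul_self_mulVec_pos F (hAF ▸ hx))
  have hBu : IsUnit B.det := (isUnit_iff_isUnit_det B).mp hB.isUnit
  have hBs : B.IsSymm := isHermitian_iff_isSymm.mp hB.isHermitian
  have hC_quad (w : Fin m → ℝ) (hw : w ⬝ᵥ w = 1 / ρ) :
      w ⬝ᵥ C *ᵥ w = 1 - (w ⬝ᵥ (F * B⁻¹ * Fᵀ) *ᵥ w) / (2 * s) := by
    rw [hC, dotProduct_smul_one_sub_smul_mulVec (by positivity) _ _ hw, div_eq_inv_mul]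
  have hD_quad (w : Fin m → ℝ) : w ⬝ᵥ D *ᵥ w = (w ⬝ᵥ q) ^ 2 := by
    rw [hD, vecMulVec_mulVec, op_smul_eq_smul, dotProduct_smul, smul_eq_mul, dotProduct_comm, sq]
  have hdecrease (w : Fin m → ℝ) (hw : w ⬝ᵥ F *ᵥ x = 0)
      (hσw : 0 < 1 - (w ⬝ᵥ (F * B⁻¹ * Fᵀ) *ᵥ w) / (2 * s)) :
      g ⬝ᵥ (surrogateHessian B F s w)⁻¹ *ᵥ g = (1 / 2) * (g ⬝ᵥ B⁻¹ *ᵥ g) +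
        (4 * s ^ 3)⁻¹ * ((w ⬝ᵥ D *ᵥ w) / (1 - (w ⬝ᵥ (F * B⁻¹ * Fᵀ) *ᵥ w) / (2 * s))) := by
    rw [dotProduct_surrogateHessian_inv_mulVec hBu hBs F s w g hσw.ne', hg,
      dotProduct_mulVec_inv_mulVec_gradient hBu F A x s hw, ← hg, ← hq, hD_quad]
    ring
  have hvC : v ⬝ᵥ C *ᵥ v = σ := by rw [hC_quad v hvv, hσdef]
  refine ⟨hvC, ?_, ?_⟩
  · rw [hvC, hσdef]
    exact hdecrease v hvFx (hσdef ▸ hσ)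
  · rintro v₁ v₂ ⟨hv₁F, hv₁v₁, hσ₁⟩ ⟨hv₂F, hv₂v₂, hσ₂⟩
    rw [← surrogateHessian, ← surrogateHessian, hdecrease v₁ hv₁F hσ₁, hdecrease v₂ hv₂F hσ₂,
      hC_quad v₁ hv₁v₁, hC_quad v₂ hv₂v₂, add_le_add_iff_left]
    exact mul_le_mul_iff_right₀ (by positivity)

/-- Selecting the optimal `v` reduces to a new generalized eigenvalue problem: under the
constraints `vᵀFx = 0`, `vᵀv = 1/ρ`, `σ > 0`, one has `vᵀCv = σ` and
`gᵀH⁻¹g = ½gᵀB⁻¹g + (vᵀDv)/(vᵀCv)/(4(xᵀAx)^{3/2})`; consequently maximizing the surrogate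
decrease `gᵀH⁻¹g` over the constraint set is equivalent to maximizing the generalized
Rayleigh quotient `(vᵀDv)/(vᵀCv)`. -/
theorem stmt_17 {n m : ℕ} (A B : Matrix (Fin n) (Fin n) ℝ)
    (F : Matrix (Fin m) (Fin n) ℝ)
    (hA : A.PosSemidef) (hAF : A = Fᵀ * F) (hB : B.PosDef)
    (x : Fin n → ℝ) (hx : A *ᵥ x ≠ 0) (ρ : ℝ) (hρ : 1 ≤ ρ)
    (g : Fin n → ℝ)
    (hg : g = (2 : ℝ) • (B *ᵥ x) - (Real.sqrt (x ⬝ᵥ A *ᵥ x))⁻¹ • (A *ᵥ x))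
    (q : Fin m → ℝ) (hq : q = F *ᵥ (B⁻¹ *ᵥ (A *ᵥ x)))
    (D C : Matrix (Fin m) (Fin m) ℝ) (hD : D = vecMulVec q q)
    (hC : C = ρ • (1 : Matrix (Fin m) (Fin m) ℝ)
      - (2 * Real.sqrt (x ⬝ᵥ A *ᵥ x))⁻¹ • (F * B⁻¹ * Fᵀ))
    (v : Fin m → ℝ) (hvFx : v ⬝ᵥ (F *ᵥ x) = 0) (hvv : v ⬝ᵥ v = 1 / ρ)
    (σ : ℝ)
    (hσdef : σ = 1 - (v ⬝ᵥ (F * B⁻¹ * Fᵀ) *ᵥ v) / (2 * Real.sqrt (x ⬝ᵥ A *ᵥ x)))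
    (hσ : 0 < σ) :
    v ⬝ᵥ C *ᵥ v = σ ∧
    g ⬝ᵥ ((2 : ℝ) • B - (Real.sqrt (x ⬝ᵥ A *ᵥ x))⁻¹ •
        vecMulVec (Fᵀ *ᵥ v) (Fᵀ *ᵥ v))⁻¹ *ᵥ g =
      (1 / 2 : ℝ) * (g ⬝ᵥ B⁻¹ *ᵥ g)
        + (4 * (Real.sqrt (x ⬝ᵥ A *ᵥ x)) ^ 3)⁻¹ * ((v ⬝ᵥ D *ᵥ v) / (v ⬝ᵥ C *ᵥ v)) ∧
    ∀ v₁ v₂ : Fin m → ℝ,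
      (v₁ ⬝ᵥ (F *ᵥ x) = 0 ∧ v₁ ⬝ᵥ v₁ = 1 / ρ ∧
        0 < 1 - (v₁ ⬝ᵥ (F * B⁻¹ * Fᵀ) *ᵥ v₁) / (2 * Real.sqrt (x ⬝ᵥ A *ᵥ x))) →
      (v₂ ⬝ᵥ (F *ᵥ x) = 0 ∧ v₂ ⬝ᵥ v₂ = 1 / ρ ∧
        0 < 1 - (v₂ ⬝ᵥ (F * B⁻¹ * Fᵀ) *ᵥ v₂) / (2 * Real.sqrt (x ⬝ᵥ A *ᵥ x))) →
      (g ⬝ᵥ ((2 : ℝ) • B - (Real.sqrt (x ⬝ᵥ A *ᵥ x))⁻¹ •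
            vecMulVec (Fᵀ *ᵥ v₁) (Fᵀ *ᵥ v₁))⁻¹ *ᵥ g ≤
        g ⬝ᵥ ((2 : ℝ) • B - (Real.sqrt (x ⬝ᵥ A *ᵥ x))⁻¹ •
            vecMulVec (Fᵀ *ᵥ v₂) (Fᵀ *ᵥ v₂))⁻¹ *ᵥ g ↔
        (v₁ ⬝ᵥ D *ᵥ v₁) / (v₁ ⬝ᵥ C *ᵥ v₁) ≤ (v₂ ⬝ᵥ D *ᵥ v₂) / (v₂ ⬝ᵥ C *ᵥ v₂)) :=
  stmt_17_general A B F hAF hB x hx ρ hρ g hg q hq D C hD hC v hvFx hvv σ hσdef hσ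
end

section
/- Let A = FᵀF be an n×n real symmetric positive semidefinite matrix with A ≠ 0 (F an m×n real matrix), B an n×n real symmetric positive definite matrix, x ∈ ℝⁿ with xᵀAx > 0, ρ ≥ 1, and λ₁ = max_{z≠0} (zᵀAz)/(zᵀBz). Let v ∈ ℝᵐ satisfy vᵀv = 1/ρ, set q = FB⁻¹Ax, D = qqᵀ, and C = ρI − FB⁻¹Fᵀ/(2(xᵀAx)^{1/2}). If 1 − λ₁/(2ρ(xᵀAx)^{1/2}) > 0 and vᵀCv > 0, then (vᵀq)² ≤ (vᵀDv)/(vᵀCv) ≤ (vᵀq)²/(1 − λ₁/(2ρ(xᵀAx)^{1/2})). -/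
/-!
With `s = vᵀFB⁻¹Fᵀv`, the constraint `vᵀv = 1/ρ` gives `vᵀDv = (vᵀq)²` and
`vᵀCv = 1 − s/(2√(xᵀAx))`. The matrix `FB⁻¹Fᵀ` is positive semidefinite with spectrum bounded by
`λ₁`, so `0 ≤ s ≤ λ₁/ρ`, whence `1 − λ₁/(2ρ√(xᵀAx)) ≤ vᵀCv ≤ 1`; dividing `(vᵀq)² ≥ 0` by these
bounds gives both inequalities.
-/

open Matrix

namespace Matrix

variable {m n : Type*} [Fintype m] [Fintype n]

theorem dotProduct_vecMulVec_self_mulVec (q v : m → ℝ) :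
    v ⬝ᵥ vecMulVec q q *ᵥ v = (v ⬝ᵥ q) ^ 2 := by
  rw [vecMulVec_mulVec, op_smul_eq_smul, dotProduct_smul, smul_eq_mul, dotProduct_comm q v, sq]

theorem dotProduct_sq_le_dotProduct_self_mul (v w : m → ℝ) :
    (v ⬝ᵥ w) ^ 2 ≤ (v ⬝ᵥ v) * (w ⬝ᵥ w) := by
  simpa only [dotProduct, sq] using Finset.sum_mul_sq_le_sq_mul_sq Finset.univ v w

namespace PosDef

variable {B : Matrix n n ℝ}

theorem dotProduct_mulVec_le_mul_of_mem_upperBounds (hB : B.PosDef) {A : Matrix n n ℝ} {lam : ℝ}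
    (hlam : lam ∈ upperBounds
      {r : ℝ | ∃ z : n → ℝ, z ≠ 0 ∧ r = (z ⬝ᵥ A *ᵥ z) / (z ⬝ᵥ B *ᵥ z)})
    (z : n → ℝ) : z ⬝ᵥ A *ᵥ z ≤ lam * (z ⬝ᵥ B *ᵥ z) := by
  rcases eq_or_ne z 0 with rfl | hz
  · simp
  have hBz : 0 < z ⬝ᵥ B *ᵥ z := by simpa using hB.dotProduct_mulVec_pos hz
  exact (div_le_iff₀ hBz).mp (hlam ⟨z, hz, rfl⟩)

variable [DecidableEq n]

theorem dotProduct_mul_inv_mul_transpose_mulVec_nonneg (hB : B.PosDef) (F : Matrix m n ℝ)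
    (w : m → ℝ) : 0 ≤ w ⬝ᵥ (F * B⁻¹ * Fᵀ) *ᵥ w := by
  have h := (hB.posSemidef.inv.mul_mul_conjTranspose_same F).dotProduct_mulVec_nonneg w
  rwa [conjTranspose_eq_transpose_of_trivial, star_trivial] at h

/-- With `z = B⁻¹Fᵀw`, the form `s = wᵀFB⁻¹Fᵀw` equals both `zᵀBz` and `wᵀFz`, so Cauchy–Schwarz
gives `s² ≤ ‖w‖² ‖Fz‖² ≤ ‖w‖² λ s`. -/
theorem dotProduct_mul_inv_mul_transpose_mulVec_le (hB : B.PosDef) (F : Matrix m n ℝ) {lam : ℝ}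
    (hlam0 : 0 ≤ lam) (hlam : ∀ z, z ⬝ᵥ (Fᵀ * F) *ᵥ z ≤ lam * (z ⬝ᵥ B *ᵥ z)) (w : m → ℝ) :
    w ⬝ᵥ (F * B⁻¹ * Fᵀ) *ᵥ w ≤ lam * (w ⬝ᵥ w) := by
  set s := w ⬝ᵥ (F * B⁻¹ * Fᵀ) *ᵥ w
  set z := B⁻¹ *ᵥ (Fᵀ *ᵥ w)
  have hs_Fz : s = w ⬝ᵥ F *ᵥ z := by simp only [s, z, mulVec_mulVec, Matrix.mul_assoc]
  have hs_Bz : s = z ⬝ᵥ B *ᵥ z := by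
    rw [mulVec_mulVec, mul_nonsing_inv _ ((isUnit_iff_isUnit_det B).mp hB.isUnit), one_mulVec,
      hs_Fz, dotProduct_mulVec, ← mulVec_transpose, dotProduct_comm]
  have hFz : (F *ᵥ z) ⬝ᵥ (F *ᵥ z) ≤ lam * s := calc
    (F *ᵥ z) ⬝ᵥ (F *ᵥ z) = z ⬝ᵥ (Fᵀ * F) *ᵥ z := by
      rw [← mulVec_mulVec, dotProduct_mulVec, ← mulVec_transpose, dotProduct_comm]
    _ ≤ lam * s := hs_Bz ▸ hlam z
  have hs0 : 0 ≤ s := dotProduct_mul_inv_mul_transpose_mulVec_nonneg hB F w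
  have hww : 0 ≤ w ⬝ᵥ w := by simpa using dotProduct_self_star_nonneg w
  have hcs : s ^ 2 ≤ (w ⬝ᵥ w) * (lam * s) := calc
    s ^ 2 = (w ⬝ᵥ F *ᵥ z) ^ 2 := by rw [hs_Fz]
    _ ≤ (w ⬝ᵥ w) * ((F *ᵥ z) ⬝ᵥ (F *ᵥ z)) := dotProduct_sq_le_dotProduct_self_mul _ _
    _ ≤ (w ⬝ᵥ w) * (lam * s) := mul_le_mul_of_nonneg_left hFz hww
  nlinarith [mul_nonneg hlam0 hww]

end PosDef

end Matrix

theorem stmt_18_general {n m : ℕ} (A B : Matrix (Fin n) (Fin n) ℝ)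
    (F : Matrix (Fin m) (Fin n) ℝ)
    (hAF : A = Fᵀ * F) (hB : B.PosDef)
    (x : Fin n → ℝ) (hx : 0 < x ⬝ᵥ A *ᵥ x) (ρ : ℝ) (hρ : 1 ≤ ρ)
    (lam1 : ℝ)
    (hlam : IsGreatest
      {r : ℝ | ∃ z : Fin n → ℝ, z ≠ 0 ∧ r = (z ⬝ᵥ A *ᵥ z) / (z ⬝ᵥ B *ᵥ z)} lam1)
    (v : Fin m → ℝ) (hvv : v ⬝ᵥ v = 1 / ρ)
    (q : Fin m → ℝ)
    (D C : Matrix (Fin m) (Fin m) ℝ) (hD : D = vecMulVec q q)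
    (hC : C = ρ • (1 : Matrix (Fin m) (Fin m) ℝ)
      - (2 * Real.sqrt (x ⬝ᵥ A *ᵥ x))⁻¹ • (F * B⁻¹ * Fᵀ))
    (hpos : 0 < 1 - lam1 / (2 * ρ * Real.sqrt (x ⬝ᵥ A *ᵥ x)))
    (hCv : 0 < v ⬝ᵥ C *ᵥ v) :
    (v ⬝ᵥ q) ^ 2 ≤ (v ⬝ᵥ D *ᵥ v) / (v ⬝ᵥ C *ᵥ v) ∧
    (v ⬝ᵥ D *ᵥ v) / (v ⬝ᵥ C *ᵥ v) ≤
      (v ⬝ᵥ q) ^ 2 / (1 - lam1 / (2 * ρ * Real.sqrt (x ⬝ᵥ A *ᵥ x))) := by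
  have hρ0 : 0 < ρ := one_pos.trans_le hρ
  have hRayleigh := hB.dotProduct_mulVec_le_mul_of_mem_upperBounds hlam.2
  have hlam0 : 0 ≤ lam1 := (pos_of_mul_pos_left (hx.trans_le (hRayleigh x))
    (by simpa using hB.posSemidef.dotProduct_mulVec_nonneg x)).le
  set sA := √(x ⬝ᵥ A *ᵥ x)
  have hsA : 0 < sA := Real.sqrt_pos.mpr hx
  set s := v ⬝ᵥ (F * B⁻¹ * Fᵀ) *ᵥ v
  have hs0 : 0 ≤ s := hB.dotProduct_mul_inv_mul_transpose_mulVec_nonneg F v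
  have hs : s ≤ lam1 / ρ := by
    simpa [hvv, div_eq_mul_inv] using
      hB.dotProduct_mul_inv_mul_transpose_mulVec_le F hlam0 (hAF ▸ hRayleigh) v
  have hCv_eq : v ⬝ᵥ C *ᵥ v = 1 - s / (2 * sA) := by
    rw [hC, sub_mulVec, dotProduct_sub, smul_mulVec, smul_mulVec, one_mulVec, dotProduct_smul,
      dotProduct_smul, hvv, smul_eq_mul, smul_eq_mul]
    field_simp
    rfl
  rw [hD, dotProduct_vecMulVec_self_mulVec]
  refine ⟨le_div_self (sq_nonneg _) hCv ?_, div_le_div_of_nonneg_left (sq_nonneg _) hpos ?_⟩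
  · rw [hCv_eq]
    linarith [div_nonneg hs0 (by positivity : (0:ℝ) ≤ 2 * sA)]
  · calc 1 - lam1 / (2 * ρ * sA) = 1 - lam1 / ρ / (2 * sA) := by ring
      _ ≤ v ⬝ᵥ C *ᵥ v := by rw [hCv_eq]; gcongr

/-- Relaxation bounds: for `v` with `vᵀv = 1/ρ`, if `1 − λ₁/(2ρ√(xᵀAx)) > 0` and
`vᵀCv > 0`, then `(vᵀq)² ≤ (vᵀDv)/(vᵀCv) ≤ (vᵀq)²/(1 − λ₁/(2ρ√(xᵀAx)))`. -/
theorem stmt_18 {n m : ℕ} (A B : Matrix (Fin n) (Fin n) ℝ)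
    (F : Matrix (Fin m) (Fin n) ℝ)
    (hA : A.PosSemidef) (hA0 : A ≠ 0) (hAF : A = Fᵀ * F) (hB : B.PosDef)
    (x : Fin n → ℝ) (hx : 0 < x ⬝ᵥ A *ᵥ x) (ρ : ℝ) (hρ : 1 ≤ ρ)
    (lam1 : ℝ)
    (hlam : IsGreatest
      {r : ℝ | ∃ z : Fin n → ℝ, z ≠ 0 ∧ r = (z ⬝ᵥ A *ᵥ z) / (z ⬝ᵥ B *ᵥ z)} lam1)
    (v : Fin m → ℝ) (hvv : v ⬝ᵥ v = 1 / ρ)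
    (q : Fin m → ℝ) (hq : q = F *ᵥ (B⁻¹ *ᵥ (A *ᵥ x)))
    (D C : Matrix (Fin m) (Fin m) ℝ) (hD : D = vecMulVec q q)
    (hC : C = ρ • (1 : Matrix (Fin m) (Fin m) ℝ)
      - (2 * Real.sqrt (x ⬝ᵥ A *ᵥ x))⁻¹ • (F * B⁻¹ * Fᵀ))
    (hpos : 0 < 1 - lam1 / (2 * ρ * Real.sqrt (x ⬝ᵥ A *ᵥ x)))
    (hCv : 0 < v ⬝ᵥ C *ᵥ v) :
    (v ⬝ᵥ q) ^ 2 ≤ (v ⬝ᵥ D *ᵥ v) / (v ⬝ᵥ C *ᵥ v) ∧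
    (v ⬝ᵥ D *ᵥ v) / (v ⬝ᵥ C *ᵥ v) ≤
      (v ⬝ᵥ q) ^ 2 / (1 - lam1 / (2 * ρ * Real.sqrt (x ⬝ᵥ A *ᵥ x))) :=
  stmt_18_general A B F hAF hB x hx ρ hρ lam1 hlam v hvv q D C hD hC hpos hCv
end
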